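/- Every cubic polynomial v ∈ P₃ satisfies the four linear relations defining the space W*_K: (1/a)·∫₀ᵃ (∂v/∂y)(x,0)·(2x−a)/a dx = (1/6)·((∂v/∂y)(a,0) − (∂v/∂y)(0,0)); (1/a)·∫₀ᵃ (∂v/∂y)(x,b)·(2x−a)/a dx = (1/6)·((∂v/∂y)(a,b) − (∂v/∂y)(0,b)); (1/b)·∫₀ᵇ (∂v/∂x)(a,y)·(2y−b)/b dy = (1/6)·((∂v/∂x)(a,b) − (∂v/∂x)(a,0)); and (1/b)·∫₀ᵇ (∂v/∂x)(0,y)·(2y−b)/b dy = (1/6)·((∂v/∂x)(0,b) − (∂v/∂x)(0,0)). (Consequently P₃(K) ⊂ W*_K.) -/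

import Mathlib

open MvPolynomial

/-! The normal derivative of a cubic has degree at most two, so its restriction to an edge is a
quadratic in the edge parameter; for a quadratic `f` on `[0, a]` the identity
`(1/a) ∫₀ᵃ f(x) (2x - a)/a dx = (f a - f 0)/6` is checked against an explicit antiderivative. -/

theorem totalDegree_pderiv_le {R σ : Type*} [CommSemiring R] (i : σ) (p : MvPolynomial σ R) :
    (pderiv i p).totalDegree ≤ p.totalDegree - 1 := by
  classical
  refine Finset.sup_le fun m hm => ?_
  have hmem : m + Finsupp.single i 1 ∈ p.support := by
    rw [mem_support_iff, coeff_pderiv] at hm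
    exact mem_support_iff.mpr (left_ne_zero_of_mul hm)
  have hdeg := le_totalDegree hmem
  rw [Finsupp.sum_add_index' (fun _ => rfl) (fun _ _ _ => rfl),
    Finsupp.sum_single_index rfl] at hdeg
  omega

theorem exists_quadratic_eval_horizontal {R : Type*} [CommSemiring R] {p : MvPolynomial (Fin 2) R}
    (hp : p.totalDegree ≤ 2) (t : R) :
    ∃ c₀ c₁ c₂ : R, ∀ x, eval ![x, t] p = c₀ + c₁ * x + c₂ * x ^ 2 := by
  set q : Polynomial R := (finSuccEquiv R 1 p).map (eval ![t])
  refine ⟨q.coeff 0, q.coeff 1, q.coeff 2, fun x => ?_⟩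
  have hq : q.natDegree < 3 := by
    have hmap : q.natDegree ≤ (finSuccEquiv R 1 p).natDegree := Polynomial.natDegree_map_le
    rw [natDegree_finSuccEquiv] at hmap
    have := degreeOf_le_totalDegree p 0
    omega
  have hcons : (![x, t] : Fin 2 → R) = Fin.cons x ![t] := by
    ext j; fin_cases j <;> rfl
  rw [hcons, eval_eq_eval_mv_eval', Polynomial.eval_eq_sum_range' hq]
  simp [Finset.sum_range_succ]

theorem exists_quadratic_eval_vertical {R : Type*} [CommSemiring R] {p : MvPolynomial (Fin 2) R}
    (hp : p.totalDegree ≤ 2) (t : R) :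
    ∃ c₀ c₁ c₂ : R, ∀ y, eval ![t, y] p = c₀ + c₁ * y + c₂ * y ^ 2 := by
  have hswap (y : R) : (![y, t] : Fin 2 → R) ∘ Equiv.swap 0 1 = ![t, y] := by
    ext j; fin_cases j <;> rfl
  simpa only [eval_rename, hswap] using
    exists_quadratic_eval_horizontal ((totalDegree_rename_le (Equiv.swap 0 1) p).trans hp) t

theorem first_moment_eq_of_quadratic {f : ℝ → ℝ}
    (hf : ∃ c₀ c₁ c₂ : ℝ, ∀ x, f x = c₀ + c₁ * x + c₂ * x ^ 2) (a : ℝ) :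
    (1 / a) * (∫ x in (0:ℝ)..a, f x * ((2 * x - a) / a)) = (1 / 6) * (f a - f 0) := by
  obtain ⟨c₀, c₁, c₂, hf⟩ := hf
  simp only [hf]
  rcases eq_or_ne a 0 with rfl | ha
  · simp
  have antideriv (x : ℝ) : HasDerivAt
      (fun x => c₂ / (2 * a) * x ^ 4 + (2 * c₁ - a * c₂) / (3 * a) * x ^ 3 +
        (2 * c₀ - a * c₁) / (2 * a) * x ^ 2 - c₀ * x)
      ((c₀ + c₁ * x + c₂ * x ^ 2) * ((2 * x - a) / a)) x := by
    refine (((((hasDerivAt_pow 4 x).const_mul _).add ((hasDerivAt_pow 3 x).const_mul _)).add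
      ((hasDerivAt_pow 2 x).const_mul _)).sub ((hasDerivAt_id' x).const_mul _)).congr_deriv ?_
    field_simp
    ring
  rw [intervalIntegral.integral_eq_sub_of_hasDerivAt (fun x _ => antideriv x)
    ((by fun_prop : Continuous _).intervalIntegrable _ _)]
  field_simp
  ring

theorem stmt15 (a b : ℝ)
    (v : MvPolynomial (Fin 2) ℝ) (hv : v.totalDegree ≤ 3) :
    (1 / a) * (∫ x in (0:ℝ)..a, eval ![x, 0] (pderiv 1 v) * ((2 * x - a) / a)) =
      (1 / 6) * (eval ![a, (0:ℝ)] (pderiv 1 v) - eval ![(0:ℝ), (0:ℝ)] (pderiv 1 v)) ∧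
    (1 / a) * (∫ x in (0:ℝ)..a, eval ![x, b] (pderiv 1 v) * ((2 * x - a) / a)) =
      (1 / 6) * (eval ![a, b] (pderiv 1 v) - eval ![(0:ℝ), b] (pderiv 1 v)) ∧
    (1 / b) * (∫ y in (0:ℝ)..b, eval ![a, y] (pderiv 0 v) * ((2 * y - b) / b)) =
      (1 / 6) * (eval ![a, b] (pderiv 0 v) - eval ![a, (0:ℝ)] (pderiv 0 v)) ∧
    (1 / b) * (∫ y in (0:ℝ)..b, eval ![(0:ℝ), y] (pderiv 0 v) * ((2 * y - b) / b)) =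
      (1 / 6) * (eval ![(0:ℝ), b] (pderiv 0 v) - eval ![(0:ℝ), (0:ℝ)] (pderiv 0 v)) := by
  have hdeg (i : Fin 2) : (pderiv i v).totalDegree ≤ 2 :=
    (totalDegree_pderiv_le i v).trans (by omega)
  exact ⟨first_moment_eq_of_quadratic (exists_quadratic_eval_horizontal (hdeg 1) 0) a,
    first_moment_eq_of_quadratic (exists_quadratic_eval_horizontal (hdeg 1) b) a,
    first_moment_eq_of_quadratic (exists_quadratic_eval_vertical (hdeg 0) a) b,
    first_moment_eq_of_quadratic (exists_quadratic_eval_vertical (hdeg 0) 0) b⟩
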